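/- Let ω(E) = ∑_{n=1}^∞ 2ⁿ m(E ∩ [2ⁿ, 2^{n+1}]) and σ(E) = m(E ∩ [0,1]), where m is Lebesgue measure on ℝ. Then the one-tailed condition A_2^{t1}(ω,σ) = sup_I (ω(I)/|I|) P(I,σ) is finite, but the two-tailed condition fails: P([0,1],ω) · P([0,1],σ) = ∞. -/

import Mathlib

open MeasureTheory ENNReal

/-- An interval in `ℝ` given by its center and (positive) half-length. -/
structure RInterval where
  c : ℝ
  r : ℝ
  hr : 0 < r

namespace RInterval

def set (I : RInterval) : Set ℝ := Set.Ico (I.c - I.r) (I.c + I.r)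

noncomputable def len (I : RInterval) : ℝ := 2 * I.r

end RInterval

/-- The one-dimensional Poisson integral `P(I,ω) = ∫ |I|/(|I|+dist(x,I))² dω(x)`. -/
noncomputable def poisson (I : RInterval) (ω : Measure ℝ) : ℝ≥0∞ :=
  ∫⁻ x, ENNReal.ofReal (I.len / (I.len + Metric.infDist x I.set) ^ 2) ∂ω


/-- The measure `ω(E) = ∑_{n≥1} 2ⁿ m(E ∩ [2ⁿ, 2^{n+1}])`. -/
noncomputable def omegaMeas : Measure ℝ :=
  Measure.sum (fun k : ℕ => ((2 : ℝ≥0∞) ^ (k + 1)) •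
    volume.restrict (Set.Ico ((2:ℝ) ^ (k + 1)) ((2:ℝ) ^ (k + 2))))

/-- The measure `σ(E) = m(E ∩ [0,1])`. -/
noncomputable def sigmaMeas : Measure ℝ := volume.restrict (Set.Ico (0:ℝ) 1)

/-- The unit interval `[0,1)` as an `RInterval`. -/
noncomputable def unitInterval' : RInterval := ⟨1/2, 1/2, by norm_num⟩


/-!
The density of `omegaMeas` is at most `x` on `[2, ∞)` and vanishes below `2`, so an interval
`I = [a, b)` has `ω(I) ≤ b (b - 2)`. Every point of `[0, 1)` lies at distance at least `a - 1`
from `I`, so `P(I, σ) ≤ |I| / (|I| + a - 1)² = |I| / (b - 1)²`, and the one-tailed quantity is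
at most `b (b - 2) / (b - 1)² < 1`. On the other hand, the dyadic block `[2ⁿ, 2ⁿ⁺¹)` carries
`ω`-mass `4ⁿ` at distance at most `2ⁿ⁺¹` from `[0, 1)`, so each block contributes at least `1/9`
to `P([0, 1), ω)`, which therefore diverges.
-/

open Set

namespace RInterval

lemma len_pos (I : RInterval) : 0 < I.len := by
  unfold len
  linarith [I.hr]

lemma len_eq_sub (I : RInterval) : I.len = (I.c + I.r) - (I.c - I.r) := by
  unfold len
  ring

lemma set_nonempty (I : RInterval) : I.set.Nonempty :=
  nonempty_Ico.2 (by linarith [I.hr])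

end RInterval

section Poisson

variable {I : RInterval} {μ : Measure ℝ} {S : Set ℝ} {d : ℝ}

lemma poisson_smul (I : RInterval) (c : ℝ≥0∞) (μ : Measure ℝ) :
    poisson I (c • μ) = c * poisson I μ :=
  lintegral_smul_measure _ _

lemma poisson_sum {ι : Type*} (I : RInterval) (μ : ι → Measure ℝ) :
    poisson I (Measure.sum μ) = ∑' i, poisson I (μ i) :=
  lintegral_sum_measure _ _

lemma poisson_restrict_le_of_le_infDist (hS : MeasurableSet S) (hd : 0 < I.len + d)
    (h : ∀ x ∈ S, d ≤ Metric.infDist x I.set) :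
    poisson I (μ.restrict S) ≤ ENNReal.ofReal (I.len / (I.len + d) ^ 2) * μ S := by
  rw [poisson, ← setLIntegral_const]
  refine setLIntegral_mono' hS fun x hx => ENNReal.ofReal_le_ofReal ?_
  have := h x hx
  have := I.len_pos
  gcongr

lemma le_poisson_restrict_of_infDist_le (hS : MeasurableSet S)
    (h : ∀ x ∈ S, Metric.infDist x I.set ≤ d) :
    ENNReal.ofReal (I.len / (I.len + d) ^ 2) * μ S ≤ poisson I (μ.restrict S) := by
  rw [poisson, ← setLIntegral_const]
  refine setLIntegral_mono' hS fun x hx => ENNReal.ofReal_le_ofReal ?_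
  have := h x hx
  have := I.len_pos
  have := Metric.infDist_nonneg (x := x) (s := I.set)
  gcongr

end Poisson

lemma pairwise_disjoint_Ico_two_pow :
    Pairwise (Function.onFun Disjoint fun k : ℕ => Ico ((2 : ℝ) ^ (k + 1)) (2 ^ (k + 2))) := by
  have hmono : Monotone fun k : ℕ => (2 : ℝ) ^ (k + 1) :=
    fun i j hij => pow_le_pow_right₀ one_le_two (by omega)
  simpa using hmono.pairwise_disjoint_on_Ico_succ

lemma omegaMeas_le_of_subset_Iio {s : Set ℝ} {b : ℝ} (hs : MeasurableSet s) (hsb : s ⊆ Iio b) :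
    omegaMeas s ≤ ENNReal.ofReal b * volume (s ∩ Ici 2) := by
  set A : ℕ → Set ℝ := fun k => Ico ((2 : ℝ) ^ (k + 1)) (2 ^ (k + 2))
  have hblock : ∀ k, (2 : ℝ≥0∞) ^ (k + 1) * volume (s ∩ A k)
      ≤ ENNReal.ofReal b * volume (s ∩ A k) := by
    intro k
    rcases (s ∩ A k).eq_empty_or_nonempty with hempty | ⟨x, hxs, hxA⟩
    · simp [hempty]
    · gcongr
      rw [← ENNReal.ofReal_ofNat 2, ← ENNReal.ofReal_pow zero_le_two]
      exact ENNReal.ofReal_le_ofReal (hxA.1.trans (hsb hxs).le)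
  have hunion : (⋃ k, s ∩ A k) ⊆ s ∩ Ici 2 := iUnion_subset fun k =>
    inter_subset_inter_right s fun x hx => le_trans (le_self_pow₀ one_le_two (by omega)) hx.1
  rw [omegaMeas, Measure.sum_apply _ hs]
  simp only [Measure.smul_apply, smul_eq_mul, Measure.restrict_apply' measurableSet_Ico]
  calc ∑' k, (2 : ℝ≥0∞) ^ (k + 1) * volume (s ∩ A k)
      ≤ ∑' k, ENNReal.ofReal b * volume (s ∩ A k) := ENNReal.tsum_le_tsum hblock
    _ = ENNReal.ofReal b * ∑' k, volume (s ∩ A k) := ENNReal.tsum_mul_left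
    _ ≤ ENNReal.ofReal b * volume (s ∩ Ici 2) := by
      gcongr
      refine (tsum_meas_le_meas_iUnion_of_disjoint _ (fun k => hs.inter measurableSet_Ico)
        (pairwise_disjoint_Ico_two_pow.mono fun _ _ h => (h.inter_left' s).inter_right' s)).trans ?_
      exact measure_mono hunion

lemma omegaMeas_Ico_le (a b : ℝ) :
    omegaMeas (Ico a b) ≤ ENNReal.ofReal b * ENNReal.ofReal (b - 2) :=
  calc omegaMeas (Ico a b) ≤ ENNReal.ofReal b * volume (Ico a b ∩ Ici 2) :=
        omegaMeas_le_of_subset_Iio measurableSet_Ico fun _ hx => hx.2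
    _ ≤ ENNReal.ofReal b * volume (Ico 2 b) := by
        gcongr
        exact fun x hx => ⟨hx.2, hx.1.2⟩
    _ = ENNReal.ofReal b * ENNReal.ofReal (b - 2) := by rw [Real.volume_Ico]

lemma poisson_sigmaMeas_le (I : RInterval) (hb : 1 < I.c + I.r) :
    poisson I sigmaMeas ≤ ENNReal.ofReal (I.len / (I.c + I.r - 1) ^ 2) := by
  have hlen := I.len_eq_sub
  have hdist : ∀ x ∈ Ico (0 : ℝ) 1, I.c - I.r - 1 ≤ Metric.infDist x I.set := by
    intro x hx
    refine (Metric.le_infDist I.set_nonempty).2 fun y hy => ?_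
    rw [Real.dist_eq]
    exact le_abs.2 (Or.inr (by linarith [hx.2, hy.1]))
  have h := poisson_restrict_le_of_le_infDist (μ := volume) measurableSet_Ico
    (by linarith) hdist
  rwa [Real.volume_Ico, sub_zero, ENNReal.ofReal_one, mul_one,
    show I.len + (I.c - I.r - 1) = I.c + I.r - 1 by linarith] at h

lemma omegaMeas_div_len_mul_poisson_sigmaMeas_le_one (I : RInterval) :
    omegaMeas I.set / ENNReal.ofReal I.len * poisson I sigmaMeas ≤ 1 := by
  set b := I.c + I.r
  have hω : omegaMeas I.set ≤ ENNReal.ofReal b * ENNReal.ofReal (b - 2) := omegaMeas_Ico_le _ _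
  rcases le_or_gt b 2 with hb | hb
  · rw [ENNReal.ofReal_eq_zero.2 (sub_nonpos.2 hb), mul_zero, nonpos_iff_eq_zero] at hω
    simp [hω]
  have hlen := I.len_pos
  calc omegaMeas I.set / ENNReal.ofReal I.len * poisson I sigmaMeas
      ≤ ENNReal.ofReal b * ENNReal.ofReal (b - 2) / ENNReal.ofReal I.len *
          ENNReal.ofReal (I.len / (b - 1) ^ 2) := by
        gcongr
        exact poisson_sigmaMeas_le I (by linarith)
    _ = ENNReal.ofReal (b * (b - 2) / (b - 1) ^ 2) := by
        rw [← ENNReal.ofReal_mul (by linarith), ← ENNReal.ofReal_div_of_pos hlen,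
          ← ENNReal.ofReal_mul (by positivity)]
        congr 1
        field_simp
    _ ≤ 1 := by
        refine ENNReal.ofReal_le_one.2 ((div_le_one (by nlinarith)).2 ?_)
        nlinarith

lemma unitInterval'_set : unitInterval'.set = Ico 0 1 := by
  norm_num [unitInterval', RInterval.set]

lemma unitInterval'_len : unitInterval'.len = 1 := by
  norm_num [unitInterval', RInterval.len]

lemma one_le_poisson_unitInterval'_sigmaMeas : 1 ≤ poisson unitInterval' sigmaMeas := by
  have h := le_poisson_restrict_of_infDist_le (I := unitInterval') (μ := volume) (d := 0)
    measurableSet_Ico fun x hx => by rw [unitInterval'_set, Metric.infDist_zero_of_mem hx]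
  simpa [sigmaMeas, unitInterval'_len, Real.volume_Ico] using h

lemma poisson_unitInterval'_omegaMeas : poisson unitInterval' omegaMeas = ⊤ := by
  have hblock : ∀ k : ℕ, ENNReal.ofReal (1 / 9) ≤ poisson unitInterval'
      ((2 : ℝ≥0∞) ^ (k + 1) • volume.restrict (Ico ((2 : ℝ) ^ (k + 1)) (2 ^ (k + 2)))) := by
    intro k
    set t : ℝ := 2 ^ (k + 1)
    have ht : 1 ≤ t := one_le_pow₀ one_le_two
    have htwo : (2 : ℝ) ^ (k + 2) = 2 * t := by rw [pow_succ]; ring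
    have hdist : ∀ x ∈ Ico t (2 * t), Metric.infDist x unitInterval'.set ≤ 2 * t := by
      intro x hx
      refine (Metric.infDist_le_dist_of_mem (unitInterval'_set ▸ left_mem_Ico.2 one_pos)).trans ?_
      rw [Real.dist_eq, sub_zero, abs_of_nonneg (by linarith [hx.1])]
      exact hx.2.le
    have h := le_poisson_restrict_of_infDist_le (μ := volume) measurableSet_Ico hdist
    rw [unitInterval'_len, Real.volume_Ico, show 2 * t - t = t by ring] at h
    rw [htwo, poisson_smul, ← ENNReal.ofReal_ofNat 2, ← ENNReal.ofReal_pow zero_le_two]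
    calc ENNReal.ofReal (1 / 9)
        ≤ ENNReal.ofReal t * (ENNReal.ofReal (1 / (1 + 2 * t) ^ 2) * ENNReal.ofReal t) := by
          rw [← ENNReal.ofReal_mul (by positivity), ← ENNReal.ofReal_mul (by positivity)]
          refine ENNReal.ofReal_le_ofReal ?_
          rw [show t * (1 / (1 + 2 * t) ^ 2 * t) = t ^ 2 / (1 + 2 * t) ^ 2 by ring,
            div_le_div_iff₀ (by norm_num) (by positivity)]
          nlinarith
      _ ≤ _ := by gcongr
  rw [omegaMeas, poisson_sum, eq_top_iff]
  calc ⊤ = ∑' _ : ℕ, ENNReal.ofReal (1 / 9) :=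
        (ENNReal.tsum_const_eq_top_of_ne_zero (by norm_num)).symm
    _ ≤ _ := ENNReal.tsum_le_tsum hblock

/-- For `ω = ∑ 2ⁿ m|_{[2ⁿ,2^{n+1}]}` and `σ = m|_{[0,1]}`, the one-tailed
`A_2^{t1}(ω,σ)` characteristic is finite, but the two-tailed condition fails at `I = [0,1]`. -/
theorem stmt_7 :
    (⨆ I : RInterval, (omegaMeas I.set / ENNReal.ofReal I.len) * poisson I sigmaMeas) < ⊤ ∧
    poisson unitInterval' omegaMeas * poisson unitInterval' sigmaMeas = ⊤ := by
  constructor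
  · exact (iSup_le omegaMeas_div_len_mul_poisson_sigmaMeas_le_one).trans_lt ENNReal.one_lt_top
  · rw [poisson_unitInterval'_omegaMeas]
    exact ENNReal.top_mul (zero_lt_one.trans_le one_le_poisson_unitInterval'_sigmaMeas).ne'
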